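/- arXiv:2507.10051 — 3 statements merged into one kernel-verified Lean document; each statement's English description precedes it below -/
import Mathlib

section
/- Let σ ∈ S(N) be a permutation with formal Morse numbers i_j := Σ_{k=1}^{j-1} (−1)^{k+1} sign(σ^{-1}(k+1) − σ^{-1}(k)). If σ contains three consecutive ascending entries σ(m−1) = σ(m) − 1 = σ(m+1) − 2 for some 1 < m < N, then deleting positions m−1 and m+1 from the one-line notation of σ and relabeling values order-isomorphically yields a permutation σ' ∈ S(N−2); in particular, if σ is dissipative then so is σ'. -/
/-- The `j`-th kept position after deleting positions `m-1` and `m+1`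
from `{1,…,N}`: the kept positions in order are `1,…,m-2, m, m+2,…,N`. -/
def keptPos (m j : ℕ) : ℕ := if j ≤ m - 2 then j else if j = m - 1 then m else j + 2

/-- Formal (reverse) pitchfork reduction: if `σ ∈ S(N)` has three consecutive
ascending entries `σ(m-1) = σ(m) - 1 = σ(m+1) - 2`, then deleting positions
`m-1` and `m+1` and relabeling the remaining values order-isomorphically
(by their ranks) yields a permutation `σ' ∈ S(N-2)`; if `σ` is dissipative
then so is `σ'`. -/
theorem stmt10 (N m : ℕ) (hm1 : 1 < m) (hmN : m < N) (σ : Equiv.Perm ℕ)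
    (hfix : ∀ k, k = 0 ∨ N < k → σ k = k)
    (hasc : σ (m - 1) + 1 = σ m ∧ σ m + 1 = σ (m + 1)) :
    ∃ σ' : Equiv.Perm ℕ,
      (∀ k, k = 0 ∨ N - 2 < k → σ' k = k) ∧
      (∀ j, 1 ≤ j → j ≤ N - 2 →
        σ' j = ((Finset.Icc 1 N).filter
          (fun k => k ≠ m - 1 ∧ k ≠ m + 1 ∧ σ k ≤ σ (keptPos m j))).card) ∧
      ((σ 1 = 1 ∧ σ N = N) → (σ' 1 = 1 ∧ σ' (N - 2) = N - 2)) := by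
  classical
  have hσ0 : σ 0 = 0 := hfix 0 (Or.inl rfl)
  have hσbig : ∀ k, N < k → σ k = k := fun k hk => hfix k (Or.inr hk)
  have hσrange : ∀ k, 1 ≤ k → k ≤ N → 1 ≤ σ k ∧ σ k ≤ N := by
    intro k hk1 hkN
    constructor
    · rcases Nat.eq_zero_or_pos (σ k) with h | h
      · have : k = 0 := σ.injective (h.trans hσ0.symm)
        omega
      · exact h
    · by_contra h
      push_neg at h
      have h2 : σ (σ k) = σ k := hσbig _ h
      have : σ k = k := σ.injective h2
      omega
  -- the set of kept positions
  set S : Finset ℕ := (Finset.Icc 1 N).filter (fun k => k ≠ m - 1 ∧ k ≠ m + 1) with hS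
  have hmemS : ∀ k, k ∈ S ↔ (1 ≤ k ∧ k ≤ N ∧ k ≠ m - 1 ∧ k ≠ m + 1) := by
    intro k; simp [hS, Finset.mem_filter, Finset.mem_Icc, and_assoc]
  have hm1N : m - 1 ∈ Finset.Icc 1 N := by simp [Finset.mem_Icc]; omega
  have hm2N : m + 1 ∈ (Finset.Icc 1 N).erase (m - 1) := by
    simp [Finset.mem_erase, Finset.mem_Icc]; omega
  have hcardS : S.card = N - 2 := by
    have h1 : S = ((Finset.Icc 1 N).erase (m - 1)).erase (m + 1) := by
      ext k
      simp only [hS, Finset.mem_erase, Finset.mem_filter]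
      tauto
    rw [h1, Finset.card_erase_of_mem hm2N, Finset.card_erase_of_mem hm1N, Nat.card_Icc]
    omega
  -- rank sets
  set F : ℕ → Finset ℕ := fun v =>
    (Finset.Icc 1 N).filter (fun k => k ≠ m - 1 ∧ k ≠ m + 1 ∧ σ k ≤ v) with hF
  have hmemF : ∀ v k, k ∈ F v ↔ k ∈ S ∧ σ k ≤ v := by
    intro v k
    simp only [hF, hS, Finset.mem_filter]
    tauto
  have hFsubS : ∀ v, F v ⊆ S := fun v k hk => ((hmemF v k).1 hk).1
  have hself : ∀ k, k ∈ S → k ∈ F (σ k) := by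
    intro k hk; rw [hmemF]; exact ⟨hk, le_refl _⟩
  have hrank1 : ∀ k, k ∈ S → 1 ≤ (F (σ k)).card := by
    intro k hk
    exact Finset.card_pos.2 ⟨k, hself k hk⟩
  have hrank2 : ∀ v, (F v).card ≤ N - 2 := by
    intro v
    calc (F v).card ≤ S.card := Finset.card_le_card (hFsubS v)
    _ = N - 2 := hcardS
  have hcardlt : ∀ k1, k1 ∈ S → ∀ k2, k2 ∈ S → σ k1 < σ k2 →
      (F (σ k1)).card < (F (σ k2)).card := by
    intro k1 hk1 k2 hk2 hlt
    apply Finset.card_lt_card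
    constructor
    · intro x hx
      rw [hmemF] at hx ⊢
      exact ⟨hx.1, hx.2.trans (le_of_lt hlt)⟩
    · intro hsub
      have h2 := hsub (hself k2 hk2)
      rw [hmemF] at h2
      omega
  have hne : ∀ k1, k1 ∈ S → ∀ k2, k2 ∈ S → k1 ≠ k2 →
      (F (σ k1)).card ≠ (F (σ k2)).card := by
    intro k1 hk1 k2 hk2 hk
    have hσne : σ k1 ≠ σ k2 := fun h => hk (σ.injective h)
    rcases lt_or_gt_of_ne hσne with h | h
    · exact Nat.ne_of_lt (hcardlt _ hk1 _ hk2 h)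
    · exact (Nat.ne_of_lt (hcardlt _ hk2 _ hk1 h)).symm
  have hkept : ∀ j, 1 ≤ j → j ≤ N - 2 → keptPos m j ∈ S := by
    intro j h1 h2
    rw [hmemS]
    unfold keptPos
    split_ifs <;> omega
  have hkeptinj : ∀ j1 j2, 1 ≤ j1 → j1 ≤ N - 2 → 1 ≤ j2 → j2 ≤ N - 2 →
      keptPos m j1 = keptPos m j2 → j1 = j2 := by
    intro j1 j2 h1 h2 h3 h4 h
    unfold keptPos at h
    split_ifs at h <;> omega
  -- the reduced map
  set f : ℕ → ℕ := fun j =>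
    if 1 ≤ j ∧ j ≤ N - 2 then (F (σ (keptPos m j))).card else j with hf
  have hfin : ∀ j, 1 ≤ j → j ≤ N - 2 → f j = (F (σ (keptPos m j))).card := by
    intro j h1 h2; simp only [hf]; rw [if_pos ⟨h1, h2⟩]
  have hfout : ∀ j, ¬ (1 ≤ j ∧ j ≤ N - 2) → f j = j := by
    intro j h; simp only [hf]; rw [if_neg h]
  have hfmem : ∀ j, 1 ≤ j → j ≤ N - 2 → 1 ≤ f j ∧ f j ≤ N - 2 := by
    intro j h1 h2
    rw [hfin j h1 h2]
    exact ⟨hrank1 _ (hkept j h1 h2), hrank2 _⟩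
  have hinj : Function.Injective f := by
    intro a b hab
    by_cases ha : 1 ≤ a ∧ a ≤ N - 2 <;> by_cases hb : 1 ≤ b ∧ b ≤ N - 2
    · by_contra hab'
      rw [hfin a ha.1 ha.2, hfin b hb.1 hb.2] at hab
      exact hne _ (hkept a ha.1 ha.2) _ (hkept b hb.1 hb.2)
        (fun h => hab' (hkeptinj a b ha.1 ha.2 hb.1 hb.2 h)) hab
    · exfalso
      rw [hfout b hb] at hab
      have := hfmem a ha.1 ha.2
      omega
    · exfalso
      rw [hfout a ha] at hab
      have := hfmem b hb.1 hb.2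
      omega
    · rw [hfout a ha, hfout b hb] at hab; exact hab
  have hsurj : Function.Surjective f := by
    intro n
    by_cases hn : 1 ≤ n ∧ n ≤ N - 2
    · have hmaps : ∀ a (ha : a ∈ Finset.Icc 1 (N - 2)),
          f a ∈ Finset.Icc 1 (N - 2) := by
        intro a ha
        rw [Finset.mem_Icc] at ha ⊢
        exact hfmem a ha.1 ha.2
      have hinj' : ∀ a₁ a₂ (ha₁ : a₁ ∈ Finset.Icc 1 (N - 2))
          (ha₂ : a₂ ∈ Finset.Icc 1 (N - 2)), f a₁ = f a₂ → a₁ = a₂ :=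
        fun a₁ a₂ _ _ h => hinj h
      obtain ⟨a, ha, hfa⟩ := Finset.surj_on_of_inj_on_of_card_le
        (fun a _ => f a) hmaps hinj' (le_refl _) n (Finset.mem_Icc.2 hn)
      exact ⟨a, hfa.symm⟩
    · exact ⟨n, hfout n hn⟩
  have hbij : Function.Bijective f := ⟨hinj, hsurj⟩
  refine ⟨Equiv.ofBijective f hbij, ?_, ?_, ?_⟩
  · intro k hk
    have : ¬ (1 ≤ k ∧ k ≤ N - 2) := by omega
    simpa using hfout k this
  · intro j h1 h2
    simpa using hfin j h1 h2
  · rintro ⟨hσ1, hσN⟩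
    have hN3 : 3 ≤ N := by omega
    constructor
    · have h1 : (1 : ℕ) ≤ N - 2 := by omega
      have := hfin 1 (le_refl 1) h1
      simp only [Equiv.ofBijective_apply]
      rw [this]
      by_cases hm2 : m = 2
      · subst hm2
        have hk : keptPos 2 1 = 2 := by unfold keptPos; norm_num
        have hσ2 : σ 2 = 2 := by
          have := hasc.1
          simp at this
          omega
        have : F (σ (keptPos 2 1)) = {2} := by
          rw [hk, hσ2]
          ext k
          rw [hmemF, hmemS, Finset.mem_singleton]
          constructor
          · rintro ⟨⟨hk1, hkN, hk3, hk5⟩, hle⟩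
            have h1k := (hσrange k hk1 hkN).1
            have : σ k = 1 ∨ σ k = 2 := by omega
            rcases this with h | h
            · exact absurd (σ.injective (h.trans hσ1.symm)) (by omega)
            · exact σ.injective (h.trans hσ2.symm)
          · rintro rfl
            refine ⟨⟨by omega, by omega, by omega, by omega⟩, by omega⟩
        rw [this]; simp
      · have hk : keptPos m 1 = 1 := by unfold keptPos; rw [if_pos (by omega)]
        have : F (σ (keptPos m 1)) = {1} := by
          rw [hk, hσ1]
          ext k
          rw [hmemF, hmemS, Finset.mem_singleton]
          constructor
          · rintro ⟨⟨hk1, hkN, hk3, hk5⟩, hle⟩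
            have h1k := (hσrange k hk1 hkN).1
            have : σ k = 1 := by omega
            exact σ.injective (this.trans hσ1.symm)
          · rintro rfl
            refine ⟨⟨le_refl _, by omega, by omega, by omega⟩, by omega⟩
        rw [this]; simp
    · have h1 : (1 : ℕ) ≤ N - 2 := by omega
      have := hfin (N - 2) h1 (le_refl _)
      simp only [Equiv.ofBijective_apply]
      rw [this]
      have hFS : F (σ (keptPos m (N - 2))) = S := by
        have hub : ∀ k, k ∈ S → σ k ≤ σ (keptPos m (N - 2)) := by
          by_cases hNm : N = m + 1
          · have hk : keptPos m (N - 2) = m := by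
              unfold keptPos; split_ifs <;> omega
            have hσm : σ m = N - 1 := by
              have h2 := hasc.2
              rw [show m + 1 = N by omega, hσN] at h2
              omega
            rw [hk, hσm]
            intro k hk'
            rw [hmemS] at hk'
            have hr := hσrange k hk'.1 hk'.2.1
            have : σ k ≠ N := by
              intro h
              have : k = N := σ.injective (h.trans hσN.symm)
              omega
            omega
          · have hk : keptPos m (N - 2) = N := by
              unfold keptPos; split_ifs <;> omega
            rw [hk, hσN]
            intro k hk'
            rw [hmemS] at hk'
            exact (hσrange k hk'.1 hk'.2.1).2
        ext k
        rw [hmemF]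
        exact ⟨fun h => h.1, fun h => ⟨h, hub k h⟩⟩
      rw [hFS, hcardS]
end

section
/- Every integrable Sturm involution σ ∈ S(N) with N ≥ 3 contains either three consecutively ascending entries σ(m−1)+1 = σ(m) = σ(m+1)−1 or three consecutively descending entries σ(m−1)−1 = σ(m) = σ(m+1)+1 for some 1 < m < N; i.e., integrable Sturm involutions are always pitchforkable. -/
/-!
Take a 2-cycle `(a b)` of minimal width. Every point strictly between `a` and `b` is fixed: by
nestedness a 2-cycle leaving `(a, b)` can only leave from `a + 1` or `b - 1`, and then the
non-crossing of the meander arcs at `a` and `b` (resp. `a - 1` and `b - 1`) produces either a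
narrower 2-cycle or two intersecting 2-cycles that are not nested.

The Jordan-curve argument on the meander shows that `σ` preserves parity: the points under the arc
from `v` to `v + 1` are paired off by the arcs of the same parity class, none of which crosses it.
Hence `b - a` is even: width `2` gives the descending triple `b, a + 1, a`, and width at least `4`
gives the ascending fixed points `a + 1, a + 2, a + 3`. If `σ` has no 2-cycle, `1, 2, 3` are fixed.
-/

/-- The formal Morse numbers of a permutation `σ` of `{1,…,N}` (encoded as a
permutation of `ℕ`): `i_j := ∑_{k=1}^{j-1} (-1)^{k+1} sign(σ⁻¹(k+1) - σ⁻¹(k))`. -/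
def morse (σ : Equiv.Perm ℕ) (j : ℕ) : ℤ :=
  ∑ k ∈ Finset.Icc 1 (j - 1),
    (-1 : ℤ) ^ (k + 1) * Int.sign ((σ⁻¹ (k + 1) : ℤ) - (σ⁻¹ k : ℤ))

/-- A 2-cycle `(a b)` (with `a < b`) of the involution `σ`. -/
def TwoCycle (σ : Equiv.Perm ℕ) (a b : ℕ) : Prop := a < b ∧ σ a = b

/-- A σ-stable fixed point: a fixed point whose formal Morse number is 0. -/
def StableFix (σ : Equiv.Perm ℕ) (e : ℕ) : Prop := σ e = e ∧ morse σ e = 0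

/-- The σ-stable core of a 2-cycle `(a b)`: the σ-stable fixed points strictly
between `a` and `b`. -/
def Core (σ : Equiv.Perm ℕ) (a b : ℕ) : Set ℕ :=
  {e | a < e ∧ e < b ∧ StableFix σ e}

/-- Two 2-cycles intersect if the corresponding open intervals intersect. -/
def Intersecting (a b c d : ℕ) : Prop := (Set.Ioo a b ∩ Set.Ioo c d).Nonempty

/-- Two 2-cycles are nested if one open interval strictly contains the other. -/
def Nested (a b c d : ℕ) : Prop := (a < c ∧ d < b) ∨ (c < a ∧ b < d)

/-- Two arcs `{a,b}` and `{c,d}` (of a stylized meander) cross. -/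
def ArcsCross (a b c d : ℕ) : Prop :=
  (min a b < min c d ∧ min c d < max a b ∧ max a b < max c d) ∨
  (min c d < min a b ∧ min a b < max c d ∧ max c d < max a b)

theorem Finset.even_card_of_involution {α : Type*} {s : Finset α} (g : α → α)
    (hg_mem : ∀ a ∈ s, g a ∈ s) (hg_inv : ∀ a ∈ s, g (g a) = a) (hg_ne : ∀ a ∈ s, g a ≠ a) :
    Even s.card := by
  have hsum : ∑ _a ∈ s, (1 : ZMod 2) = 0 :=
    Finset.sum_involution (fun a _ => g a) (fun _ _ => rfl) (fun a ha _ => hg_ne a ha)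
      hg_mem hg_inv
  rwa [Finset.sum_const, nsmul_one, ZMod.natCast_eq_zero_iff_even] at hsum

theorem Equiv.Perm.apply_mem_of_forall_notMem {α : Type*} {σ : Equiv.Perm α} {s : Set α}
    (h : ∀ k ∉ s, σ k = k) {r : α} (hr : r ∈ s) : σ r ∈ s := by
  by_contra hσr
  exact hσr (by rwa [σ.injective (h _ hσr)])

theorem mem_Ioo_iff_of_not_arcsCross {a b c d : ℕ} (h : ¬ ArcsCross a b c d)
    (hca : c ≠ a) (hcb : c ≠ b) (hda : d ≠ a) (hdb : d ≠ b) :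
    c ∈ Finset.Ioo (min a b) (max a b) ↔ d ∈ Finset.Ioo (min a b) (max a b) := by
  unfold ArcsCross at h
  simp only [Finset.mem_Ioo]
  omega

def Pitchforkable (σ : Equiv.Perm ℕ) (N : ℕ) : Prop :=
  ∃ m, 1 < m ∧ m < N ∧
    ((σ (m - 1) + 1 = σ m ∧ σ m + 1 = σ (m + 1)) ∨
     (σ m + 1 = σ (m - 1) ∧ σ (m + 1) + 1 = σ m))

theorem Pitchforkable.of_fixed {σ : Equiv.Perm ℕ} {N m : ℕ} (hm : 1 < m) (hmN : m < N)
    (h₀ : σ (m - 1) = m - 1) (h₁ : σ m = m) (h₂ : σ (m + 1) = m + 1) : Pitchforkable σ N :=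
  ⟨m, hm, hmN, Or.inl ⟨by omega, by omega⟩⟩

def MinimalTwoCycle (σ : Equiv.Perm ℕ) (a b : ℕ) : Prop :=
  TwoCycle σ a b ∧ ∀ c d, TwoCycle σ c d → b - a ≤ d - c

def TwoCyclesNested (σ : Equiv.Perm ℕ) : Prop :=
  ∀ a b c d, TwoCycle σ a b → TwoCycle σ c d → (a, b) ≠ (c, d) →
    Intersecting a b c d → Nested a b c d

/-- The interior of the meander arc joining the positions of the values `v` and `v + 1`. -/
def arcInterior (σ : Equiv.Perm ℕ) (v : ℕ) : Finset ℕ :=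
  Finset.Ioo (min (σ v) (σ (v + 1))) (max (σ v) (σ (v + 1)))

/-- The other endpoint of the meander arc through `r` whose index has the parity of `v`. -/
def arcPartner (σ : Equiv.Perm ℕ) (v r : ℕ) : ℕ :=
  if σ r % 2 = v % 2 then σ (σ r + 1) else σ (σ r - 1)

section

variable {σ : Equiv.Perm ℕ}

theorem arcPartner_arcPartner (hσ : Function.Involutive σ) {v r : ℕ} (hr : 1 ≤ σ r) :
    arcPartner σ v (arcPartner σ v r) = r := by
  unfold arcPartner
  split_ifs with h₁ h₂ h₂ <;> simp only [hσ _] at h₂ ⊢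
  · omega
  · rw [Nat.add_sub_cancel, hσ]
  · rw [Nat.sub_add_cancel hr, hσ]
  · omega

theorem arcPartner_ne (hσ : Function.Involutive σ) {v r : ℕ} (hr : 1 ≤ σ r) :
    arcPartner σ v r ≠ r := by
  conv_rhs => rw [← hσ r]
  unfold arcPartner
  split_ifs <;> exact σ.injective.ne (by omega)

theorem exists_minimalTwoCycle (hσ : Function.Involutive σ) (h : ∃ r, σ r ≠ r) :
    ∃ a b, MinimalTwoCycle σ a b := by
  classical
  have hw : ∃ w, ∃ a b, TwoCycle σ a b ∧ b - a = w := by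
    obtain ⟨r, hr⟩ := h
    rcases Nat.lt_or_gt_of_ne hr.symm with hlt | hgt
    · exact ⟨_, r, σ r, ⟨hlt, rfl⟩, rfl⟩
    · exact ⟨_, σ r, r, ⟨hgt, hσ r⟩, rfl⟩
  obtain ⟨a, b, hab, hw_eq⟩ := Nat.find_spec hw
  exact ⟨a, b, hab, fun c d hcd => hw_eq ▸ Nat.find_min' hw ⟨c, d, hcd, rfl⟩⟩

theorem TwoCyclesNested.not_linked (h : TwoCyclesNested σ) {a b c d : ℕ}
    (hab : TwoCycle σ a b) (hcd : TwoCycle σ c d) (hac : a < c) (hcb : c + 1 < b)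
    (hbd : b < d) : False := by
  have := h a b c d hab hcd (by simp only [ne_eq, Prod.mk.injEq]; omega)
    ⟨c + 1, ⟨by omega, hcb⟩, ⟨by omega, by omega⟩⟩
  unfold Nested at this
  omega

theorem TwoCycle.apply_right (hσ : Function.Involutive σ) {a b : ℕ} (hab : TwoCycle σ a b) :
    σ b = a :=
  hab.2 ▸ hσ a

theorem MinimalTwoCycle.apply_eq_self (hσ : Function.Involutive σ) {a b p : ℕ}
    (hab : MinimalTwoCycle σ a b) (hap : a < p) (hpb : p < b) (haσp : a < σ p) (hσpb : σ p < b) :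
    σ p = p := by
  by_contra hne
  rcases Nat.lt_or_gt_of_ne hne with hlt | hgt
  · have := hab.2 _ _ ⟨hlt, hσ p⟩
    omega
  · have := hab.2 _ _ ⟨hgt, rfl⟩
    omega

end

structure IsMeanderInvolution (σ : Equiv.Perm ℕ) (N : ℕ) : Prop where
  involutive : Function.Involutive σ
  apply_of_eq_zero_or_lt : ∀ k, k = 0 ∨ N < k → σ k = k
  apply_one : σ 1 = 1
  apply_last : σ N = N
  not_arcsCross : ∀ j k, 1 ≤ j → j < k → k < N → j % 2 = k % 2 →
    ¬ ArcsCross (σ⁻¹ j) (σ⁻¹ (j + 1)) (σ⁻¹ k) (σ⁻¹ (k + 1))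

namespace IsMeanderInvolution

variable {σ : Equiv.Perm ℕ} {N : ℕ}

theorem inv_apply (hσ : IsMeanderInvolution σ N) (x : ℕ) : σ⁻¹ x = σ x := by
  rw [Equiv.Perm.inv_def, Function.Involutive.symm_eq_self_of_involutive σ hσ.involutive]

theorem not_arcsCross_of_ne (hσ : IsMeanderInvolution σ N) {j k : ℕ} (hj : 1 ≤ j) (hjN : j < N)
    (hk : 1 ≤ k) (hkN : k < N) (hjk : j ≠ k) (hpar : j % 2 = k % 2) :
    ¬ ArcsCross (σ j) (σ (j + 1)) (σ k) (σ (k + 1)) := by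
  simp only [← hσ.inv_apply]
  rcases hjk.lt_or_gt with hlt | hgt
  · exact hσ.not_arcsCross j k hj hlt hkN hpar
  · have := hσ.not_arcsCross k j hk hgt hjN hpar.symm
    unfold ArcsCross at this ⊢
    tauto

theorem apply_mem_Icc (hσ : IsMeanderInvolution σ N) {r : ℕ} (hr : r ∈ Set.Icc 1 N) :
    σ r ∈ Set.Icc 1 N :=
  Equiv.Perm.apply_mem_of_forall_notMem (fun k hk => hσ.apply_of_eq_zero_or_lt k (by
    simp only [Set.mem_Icc] at hk; omega)) hr

theorem apply_eq_self_of_notMem_Ioo (hσ : IsMeanderInvolution σ N) {k : ℕ}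
    (hk : k ∉ Set.Ioo 1 N) : σ k = k := by
  simp only [Set.mem_Ioo, not_and_or, not_lt] at hk
  rcases Nat.lt_or_ge N k with hNk | hkN
  · exact hσ.apply_of_eq_zero_or_lt k (Or.inr hNk)
  obtain rfl | rfl | rfl : k = 0 ∨ k = 1 ∨ k = N := by omega
  exacts [hσ.apply_of_eq_zero_or_lt 0 (Or.inl rfl), hσ.apply_one, hσ.apply_last]

theorem apply_mem_Ioo (hσ : IsMeanderInvolution σ N) {r : ℕ} (hr : r ∈ Set.Ioo 1 N) :
    σ r ∈ Set.Ioo 1 N :=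
  Equiv.Perm.apply_mem_of_forall_notMem (fun _ => hσ.apply_eq_self_of_notMem_Ioo) hr

theorem mem_Ioo_of_apply_ne (hσ : IsMeanderInvolution σ N) {x : ℕ} (hx : σ x ≠ x) :
    x ∈ Set.Ioo 1 N := by
  by_contra hx'
  exact hx (hσ.apply_eq_self_of_notMem_Ioo hx')

theorem apply_mem_arcInterior_iff (hσ : IsMeanderInvolution σ N) {v j : ℕ}
    (hv : 1 ≤ v) (hvN : v < N) (hj : 1 ≤ j) (hjN : j < N) (hjv : j ≠ v)
    (hpar : j % 2 = v % 2) :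
    σ j ∈ arcInterior σ v ↔ σ (j + 1) ∈ arcInterior σ v :=
  mem_Ioo_iff_of_not_arcsCross (hσ.not_arcsCross_of_ne hv hvN hj hjN hjv.symm hpar.symm)
    (σ.injective.ne hjv) (σ.injective.ne (by omega)) (σ.injective.ne (by omega))
    (σ.injective.ne (by omega))

theorem mem_Ioo_of_mem_arcInterior (hσ : IsMeanderInvolution σ N) {v r : ℕ} (hv : 1 ≤ v)
    (hvN : v < N) (hr : r ∈ arcInterior σ v) : r ∈ Set.Ioo 1 N := by
  have hv₀ := hσ.apply_mem_Icc (r := v) ⟨hv, hvN.le⟩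
  have hv₁ := hσ.apply_mem_Icc (r := v + 1) ⟨by omega, hvN⟩
  rw [arcInterior, Finset.mem_Ioo] at hr
  rw [Set.mem_Icc] at hv₀ hv₁
  constructor <;> omega

theorem arcPartner_mem_arcInterior (hσ : IsMeanderInvolution σ N) {v r : ℕ} (hv : 1 ≤ v)
    (hvN : v < N) (hr : r ∈ arcInterior σ v) : arcPartner σ v r ∈ arcInterior σ v := by
  have hu := hσ.apply_mem_Ioo (hσ.mem_Ioo_of_mem_arcInterior hv hvN hr)
  have hr' := hr
  rw [arcInterior, Finset.mem_Ioo] at hr'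
  rw [Set.mem_Ioo] at hu
  have hσr_ne : σ r ≠ v := fun h => by
    rw [← h, hσ.involutive] at hr'; omega
  have hσr_ne' : σ r ≠ v + 1 := fun h => by
    rw [← h, hσ.involutive] at hr'; omega
  unfold arcPartner
  split_ifs with hpar
  · rwa [← hσ.apply_mem_arcInterior_iff hv hvN (by omega) hu.2 hσr_ne hpar, hσ.involutive]
  · have hsucc : σ r - 1 + 1 = σ r := by omega
    rwa [hσ.apply_mem_arcInterior_iff hv hvN (by omega) (by omega) (by omega) (by omega), hsucc,
      hσ.involutive]

theorem apply_mod_two_ne_apply_succ_mod_two (hσ : IsMeanderInvolution σ N) {v : ℕ} (hv : 1 ≤ v)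
    (hvN : v < N) : σ v % 2 ≠ σ (v + 1) % 2 := by
  have hpos : ∀ r ∈ arcInterior σ v, 1 ≤ σ r := fun r hr =>
    (hσ.apply_mem_Ioo (hσ.mem_Ioo_of_mem_arcInterior hv hvN hr)).1.le
  have heven : Even (arcInterior σ v).card :=
    Finset.even_card_of_involution (arcPartner σ v)
      (fun r hr => hσ.arcPartner_mem_arcInterior hv hvN hr)
      (fun r hr => arcPartner_arcPartner hσ.involutive (hpos r hr))
      (fun r hr => arcPartner_ne hσ.involutive (hpos r hr))
  have hne : σ v ≠ σ (v + 1) := σ.injective.ne (by omega)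
  rw [arcInterior, Nat.card_Ioo, Nat.even_iff] at heven
  omega

theorem apply_mod_two (hσ : IsMeanderInvolution σ N) {v : ℕ} (hv : 1 ≤ v) (hvN : v ≤ N) :
    σ v % 2 = v % 2 := by
  induction v, hv using Nat.le_induction with
  | base => rw [hσ.apply_one]
  | succ v hv ih =>
    have := hσ.apply_mod_two_ne_apply_succ_mod_two hv hvN
    have := ih (by omega)
    omega

theorem one_lt_of_twoCycle (hσ : IsMeanderInvolution σ N) {a b : ℕ} (hab : TwoCycle σ a b) :
    1 < a :=
  (hσ.mem_Ioo_of_apply_ne (hab.2 ▸ hab.1.ne')).1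

theorem lt_of_twoCycle (hσ : IsMeanderInvolution σ N) {a b : ℕ} (hab : TwoCycle σ a b) : b < N :=
  (hσ.mem_Ioo_of_apply_ne ((hab.apply_right hσ.involutive).trans_ne hab.1.ne)).2

theorem mod_two_eq_of_twoCycle (hσ : IsMeanderInvolution σ N) {a b : ℕ} (hab : TwoCycle σ a b) :
    b % 2 = a % 2 :=
  hab.2 ▸ hσ.apply_mod_two (hσ.one_lt_of_twoCycle hab).le (hab.1.trans (hσ.lt_of_twoCycle hab)).le

theorem le_apply_of_minimalTwoCycle (hσ : IsMeanderInvolution σ N) (hnest : TwoCyclesNested σ)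
    {a b p : ℕ} (hab : MinimalTwoCycle σ a b) (hap : a < p) (hpb : p < b) : a ≤ σ p := by
  have ha := hσ.one_lt_of_twoCycle hab.1
  have hb := hσ.lt_of_twoCycle hab.1
  have hpar := hσ.mod_two_eq_of_twoCycle hab.1
  have hσb := hab.1.apply_right hσ.involutive
  obtain ⟨⟨hlt, hσa⟩, hmin⟩ := hab
  by_contra! hq
  have hσq : σ (σ p) = p := hσ.involutive p
  obtain rfl : p = a + 1 := by
    by_contra hp
    exact hnest.not_linked ⟨hq.trans hap, hσq⟩ ⟨hlt, hσa⟩ hq (by omega) hpb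
  -- The arc `{b, σ (a + 1)}` of `a` passes over `a = σ b`, so it also covers the other end of
  -- the arc of `b`.
  have ht : σ (b + 1) ∈ arcInterior σ a := by
    rw [← hσ.apply_mem_arcInterior_iff (by omega) (by omega) (by omega) hb (by omega) hpar, hσb,
      arcInterior, hσa, Finset.mem_Ioo]
    omega
  rw [arcInterior, hσa, Finset.mem_Ioo] at ht
  have hσt : σ (σ (b + 1)) = b + 1 := hσ.involutive _
  rcases lt_trichotomy (σ (b + 1)) a with hta | hta | hta
  · exact hnest.not_linked ⟨by omega, hσq⟩ ⟨by omega, hσt⟩ (by omega) (by omega) (by omega)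
  · rw [hta, hσa] at hσt
    omega
  · have := hmin _ _ ⟨by omega, hσt⟩
    obtain hta1 : σ (b + 1) = a + 1 := by omega
    rw [hta1] at hσt
    omega

theorem apply_le_of_minimalTwoCycle (hσ : IsMeanderInvolution σ N) (hnest : TwoCyclesNested σ)
    {a b p : ℕ} (hab : MinimalTwoCycle σ a b) (hap : a < p) (hpb : p < b) : σ p ≤ b := by
  have ha := hσ.one_lt_of_twoCycle hab.1
  have hb := hσ.lt_of_twoCycle hab.1
  have hpar := hσ.mod_two_eq_of_twoCycle hab.1
  have hσb := hab.1.apply_right hσ.involutive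
  obtain ⟨⟨hlt, hσa⟩, hmin⟩ := hab
  by_contra! hq
  obtain rfl : p = b - 1 := by
    by_contra hp
    exact hnest.not_linked ⟨hlt, hσa⟩ ⟨hpb.trans hq, rfl⟩ hap (by omega) hq
  have hb1 : b - 1 + 1 = b := by omega
  -- The arc `{σ (b - 1), a}` of `b - 1` passes over `b = σ a`, so it also covers the other end
  -- of the arc of `a - 1`.
  have hz : σ (a - 1) ∈ arcInterior σ (b - 1) := by
    rw [hσ.apply_mem_arcInterior_iff (v := b - 1) (j := a - 1) (by omega) (by omega) (by omega)
      (by omega) (by omega) (by omega), Nat.sub_add_cancel ha.le, hσa, arcInterior, hb1, hσb,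
      Finset.mem_Ioo]
    omega
  rw [arcInterior, hb1, hσb, Finset.mem_Ioo] at hz
  have hσz : σ (σ (a - 1)) = a - 1 := hσ.involutive _
  rcases lt_trichotomy (σ (a - 1)) b with hzb | hzb | hzb
  · have := hmin (a - 1) (σ (a - 1)) ⟨by omega, rfl⟩
    obtain hzb1 : σ (a - 1) = b - 1 := by omega
    rw [hzb1] at hσz
    omega
  · rw [hzb, hσb] at hσz
    omega
  · exact hnest.not_linked (a := a - 1) (c := b - 1) ⟨by omega, rfl⟩ ⟨by omega, rfl⟩ (by omega)
      (by omega) (by omega)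

theorem apply_eq_self_of_minimalTwoCycle (hσ : IsMeanderInvolution σ N)
    (hnest : TwoCyclesNested σ) {a b p : ℕ} (hab : MinimalTwoCycle σ a b) (hap : a < p)
    (hpb : p < b) : σ p = p := by
  refine hab.apply_eq_self hσ.involutive hap hpb
    ((hσ.le_apply_of_minimalTwoCycle hnest hab hap hpb).lt_of_ne ?_)
    ((hσ.apply_le_of_minimalTwoCycle hnest hab hap hpb).lt_of_ne ?_)
  · rw [← hab.1.apply_right hσ.involutive]
    exact σ.injective.ne hpb.ne'
  · rw [← hab.1.2]
    exact σ.injective.ne hap.ne'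

theorem pitchforkable_of_minimalTwoCycle (hσ : IsMeanderInvolution σ N)
    (hnest : TwoCyclesNested σ) {a b : ℕ} (hab : MinimalTwoCycle σ a b) : Pitchforkable σ N := by
  have ha := hσ.one_lt_of_twoCycle hab.1
  have hb := hσ.lt_of_twoCycle hab.1
  have hpar := hσ.mod_two_eq_of_twoCycle hab.1
  have hσb := hab.1.apply_right hσ.involutive
  obtain ⟨hlt, hσa⟩ := hab.1
  have hfix {p : ℕ} (hap : a < p) (hpb : p < b) : σ p = p :=
    hσ.apply_eq_self_of_minimalTwoCycle hnest hab hap hpb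
  obtain rfl | hw : b = a + 2 ∨ a + 4 ≤ b := by omega
  · have hmid : σ (a + 1) = a + 1 := hfix (by omega) (by omega)
    refine ⟨a + 1, by omega, by omega, Or.inr ⟨?_, ?_⟩⟩
    · rw [hmid, Nat.add_sub_cancel, hσa]
    · rw [hmid, hσb]
  · exact Pitchforkable.of_fixed (m := a + 2) (by omega) (by omega) (hfix (by omega) (by omega))
      (hfix (by omega) (by omega)) (hfix (by omega) (by omega))

end IsMeanderInvolution

theorem stmt11_general (N : ℕ) (hN : 3 ≤ N) (σ : Equiv.Perm ℕ)
    (hfix : ∀ k, k = 0 ∨ N < k → σ k = k)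
    (hinv : ∀ x, σ (σ x) = x)
    (hdiss : σ 1 = 1 ∧ σ N = N)
    (hmeander : ∀ j k, 1 ≤ j → j < k → k < N → j % 2 = k % 2 →
      ¬ ArcsCross (σ⁻¹ j) (σ⁻¹ (j + 1)) (σ⁻¹ k) (σ⁻¹ (k + 1)))
    (hnested : ∀ a b c d, TwoCycle σ a b → TwoCycle σ c d → (a, b) ≠ (c, d) →
      Intersecting a b c d → Nested a b c d) :
    ∃ m, 1 < m ∧ m < N ∧
      ((σ (m - 1) + 1 = σ m ∧ σ m + 1 = σ (m + 1)) ∨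
       (σ m + 1 = σ (m - 1) ∧ σ (m + 1) + 1 = σ m)) := by
  have hσ : IsMeanderInvolution σ N := ⟨hinv, hfix, hdiss.1, hdiss.2, hmeander⟩
  by_cases hid : ∃ r, σ r ≠ r
  · obtain ⟨a, b, hab⟩ := exists_minimalTwoCycle hσ.involutive hid
    exact hσ.pitchforkable_of_minimalTwoCycle hnested hab
  · simp only [not_exists, not_not] at hid
    exact Pitchforkable.of_fixed (m := 2) (by omega) (by omega) (hid 1) (hid 2) (hid 3)

/-- Every integrable Sturm involution `σ ∈ S(N)`, `N ≥ 3`, is pitchforkable: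
it contains three consecutively ascending or three consecutively descending
entries. Here `σ` is a dissipative Morse involution, its meander arcs are
noncrossing, intersecting 2-cycles are nested, core-equivalent nested 2-cycles
are centered, and non-nested 2-cycles are separated by a σ-stable fixed point. -/
theorem stmt11 (N : ℕ) (hN : 3 ≤ N) (σ : Equiv.Perm ℕ)
    (hfix : ∀ k, k = 0 ∨ N < k → σ k = k)
    (hinv : ∀ x, σ (σ x) = x)
    (hdiss : σ 1 = 1 ∧ σ N = N)
    (hmorse : ∀ j, 1 ≤ j → j ≤ N → 0 ≤ morse σ j)
    (hmeander : ∀ j k, 1 ≤ j → j < k → k < N → j % 2 = k % 2 →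
      ¬ ArcsCross (σ⁻¹ j) (σ⁻¹ (j + 1)) (σ⁻¹ k) (σ⁻¹ (k + 1)))
    (hnested : ∀ a b c d, TwoCycle σ a b → TwoCycle σ c d → (a, b) ≠ (c, d) →
      Intersecting a b c d → Nested a b c d)
    (hcentered : ∀ a b c d, TwoCycle σ a b → TwoCycle σ c d → a < c → d < b →
      Core σ a b = Core σ c d → (c - a : ℤ) = (b - d : ℤ))
    (hsep : ∀ a b c d, TwoCycle σ a b → TwoCycle σ c d → b < c →
      ∃ e, b < e ∧ e < c ∧ StableFix σ e) :
    ∃ m, 1 < m ∧ m < N ∧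
      ((σ (m - 1) + 1 = σ m ∧ σ m + 1 = σ (m + 1)) ∨
       (σ m + 1 = σ (m - 1) ∧ σ (m + 1) + 1 = σ m)) :=
  stmt11_general N hN σ hfix hinv hdiss hmeander hnested
end

section
/- For n = 3 homogeneous equilibria and q ≥ 0 frozen/rotating waves, the number of full lap signatures of the form ●(S ⊙ S^rev)● with S a lap list of length q satisfying ℓ₁ = 1, the neighbor jump condition, and the alternate jump condition, equals 1, 1, 2, 3, 6 for q = 0, 1, 2, 3, 4 respectively. -/
/-- Extension of a lap list by `ℓ₀ := 0`. -/
def lapExt (ℓ : ℕ → ℕ) : ℕ → ℕ := fun j => if j = 0 then 0 else ℓ j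

/-- Neighbor jump condition: `|ℓ_{j+1} - ℓ_j| ≤ 1` for `1 ≤ j < s`. -/
def NbrJump (ℓ : ℕ → ℕ) (s : ℕ) : Prop :=
  ∀ j, 1 ≤ j → j < s → |(ℓ (j + 1) : ℤ) - (ℓ j : ℤ)| ≤ 1

/-- Alternate jump condition for every maximal constant block
`ℓ_{j₀-1} ≠ ℓ_{j₀} = ⋯ = ℓ_{j₁} ≠ ℓ_{j₁+1}` (with `ℓ₀ := 0`). -/
def AltJump (ℓ : ℕ → ℕ) (s : ℕ) : Prop :=
  ∀ j₀ j₁, 1 ≤ j₀ → j₀ ≤ j₁ → j₁ < s →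
    lapExt ℓ (j₀ - 1) ≠ ℓ j₀ →
    (∀ j, j₀ ≤ j → j ≤ j₁ → ℓ j = ℓ j₀) →
    ℓ j₁ ≠ ℓ (j₁ + 1) →
    ((ℓ j₀ : ℤ) - (lapExt ℓ (j₀ - 1) : ℤ)) * ((ℓ (j₁ + 1) : ℤ) - (ℓ j₁ : ℤ)) =
      (-1 : ℤ) ^ (j₁ - j₀)

/-- An admissible central lap list `S` (possibly empty), encoded as a list `L`
with `ℓ_j = L[j-1]`: positive entries, first entry 1 (when nonempty), neighbor
and alternate jump conditions.  It encodes the full lap signature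
`●( S ⊙ S^rev )●` with `n = 3` homogeneous equilibria. -/
def CentralLapOK (L : List ℕ) : Prop :=
  (∀ x ∈ L, 0 < x) ∧ (L ≠ [] → L.getD 0 0 = 1) ∧
  NbrJump (fun j => L.getD (j - 1) 0) L.length ∧
  AltJump (fun j => L.getD (j - 1) 0) L.length


/-! Since `ℓ₁ = 1` and consecutive entries differ by at most one, every admissible lap list
satisfies `1 ≤ ℓ_j ≤ j`. So the admissible lists of length `q` are found among the `q!`
staircase lists, and counting them is a finite check. -/

instance (ℓ : ℕ → ℕ) (s : ℕ) : Decidable (NbrJump ℓ s) := by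
  unfold NbrJump; infer_instance

instance (ℓ : ℕ → ℕ) (s : ℕ) : Decidable (AltJump ℓ s) :=
  decidable_of_iff (∀ j₀, 1 ≤ j₀ → j₀ < s → ∀ j₁, j₀ ≤ j₁ → j₁ < s →
      lapExt ℓ (j₀ - 1) ≠ ℓ j₀ → (∀ j, j₀ ≤ j → j ≤ j₁ → ℓ j = ℓ j₀) → ℓ j₁ ≠ ℓ (j₁ + 1) →
      ((ℓ j₀ : ℤ) - (lapExt ℓ (j₀ - 1) : ℤ)) * ((ℓ (j₁ + 1) : ℤ) - (ℓ j₁ : ℤ)) =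
        (-1 : ℤ) ^ (j₁ - j₀))
    ⟨fun h j₀ j₁ h₀ h₀₁ h₁ => h j₀ h₀ (h₀₁.trans_lt h₁) j₁ h₀₁ h₁,
      fun h j₀ h₀ _ j₁ h₀₁ h₁ => h j₀ j₁ h₀ h₀₁ h₁⟩

instance : DecidablePred CentralLapOK := fun L => by
  unfold CentralLapOK; infer_instance

def staircaseLists (k : ℕ) : ℕ → Finset (List ℕ)
  | 0 => {[]}
  | q + 1 => (Finset.Icc 1 k ×ˢ staircaseLists (k + 1) q).image fun p => p.1 :: p.2

theorem mem_staircaseLists {k q : ℕ} {L : List ℕ} :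
    L ∈ staircaseLists k q ↔ L.length = q ∧ ∀ i < q, L.getD i 0 ∈ Finset.Icc 1 (k + i) := by
  induction q generalizing k L with
  | zero => simp [staircaseLists, List.length_eq_zero_iff]
  | succ q ih =>
    cases L with
    | nil => simp [staircaseLists]
    | cons a t =>
      simp only [staircaseLists, Finset.mem_image, Finset.mem_product, Prod.exists,
        List.cons.injEq, exists_eq_right_right, exists_eq_right, ih, List.length_cons,
        Nat.add_right_cancel_iff, Nat.forall_lt_succ_left, List.getD_cons_zero,
        List.getD_cons_succ, add_zero, add_assoc, add_comm 1]
      tauto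

theorem CentralLapOK.getD_mem_Icc {L : List ℕ} (h : CentralLapOK L) {i : ℕ}
    (hi : i < L.length) : L.getD i 0 ∈ Finset.Icc 1 (1 + i) := by
  obtain ⟨hpos, hhead, hjump, -⟩ := h
  refine Finset.mem_Icc.2 ⟨?_, ?_⟩
  · rw [List.getD_eq_getElem _ _ hi]
    exact hpos _ (L.getElem_mem hi)
  · induction i with
    | zero => exact (hhead (List.ne_nil_of_length_pos hi)).le
    | succ i ih =>
      have hprev := ih (by omega)
      have hstep := hjump (i + 1) (by omega) hi
      simp only [Nat.add_sub_cancel, abs_le] at hstep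
      omega

theorem setOf_length_eq_and_centralLapOK (q : ℕ) :
    {L : List ℕ | L.length = q ∧ CentralLapOK L} =
      ↑((staircaseLists 1 q).filter CentralLapOK) := by
  ext L
  simp only [Set.mem_ofPred_eq, Finset.coe_filter, mem_staircaseLists]
  constructor
  · rintro ⟨rfl, h⟩
    exact ⟨⟨rfl, fun i hi => h.getD_mem_Icc hi⟩, h⟩
  · rintro ⟨⟨hlen, -⟩, h⟩
    exact ⟨hlen, h⟩

/-- For `n = 3` homogeneous equilibria and `q` waves, the number of full lap
signatures `●( S ⊙ S^rev )●` with lap list `S` of length `q` equals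
`1, 1, 2, 3, 6` for `q = 0, 1, 2, 3, 4`. -/
theorem stmt13 :
    {L : List ℕ | L.length = 0 ∧ CentralLapOK L}.ncard = 1 ∧
    {L : List ℕ | L.length = 1 ∧ CentralLapOK L}.ncard = 1 ∧
    {L : List ℕ | L.length = 2 ∧ CentralLapOK L}.ncard = 2 ∧
    {L : List ℕ | L.length = 3 ∧ CentralLapOK L}.ncard = 3 ∧
    {L : List ℕ | L.length = 4 ∧ CentralLapOK L}.ncard = 6 := by
  simp only [setOf_length_eq_and_centralLapOK, Set.ncard_coe_finset]
  decide
end
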